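/- arXiv:1904.05174 — 2 statements merged into one kernel-verified Lean document; each statement's English description precedes it below -/
import Mathlib

section
/- Let p be an odd prime, and let V = (C_p × C_p) ⋊ C_2 be the generalized dihedral group of order 2p^2. The holomorph Hol(V) contains a subgroup F₂ that is isomorphic to ZMod p × DihedralGroup p, acts regularly on V, and whose normalizer in Equiv.Perm V is contained in Hol(V). -/
/-- The holomorph of a group `X`: the normalizer in `Equiv.Perm X` of the image of the
left regular representation of `X`. -/
def Hol (X : Type*) [Group X] : Subgroup (Equiv.Perm X) :=
  Subgroup.normalizer ((MulAction.toPermHom X X).range : Set (Equiv.Perm X))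

/-- A subgroup `S` of `Equiv.Perm X` acts regularly on `X`: the action is transitive and
the stabilizer of every point is trivial. -/
def IsRegularSubgroup {X : Type*} (S : Subgroup (Equiv.Perm X)) : Prop :=
  (∀ x y : X, ∃ s ∈ S, s x = y) ∧ ∀ s ∈ S, ∀ x : X, s x = x → s = 1

/-- The inversion automorphism of `C_p × C_p` (written multiplicatively). -/
def invAut (p : ℕ) : MulAut (Multiplicative (ZMod p × ZMod p)) :=
  MulEquiv.inv (Multiplicative (ZMod p × ZMod p))

/-- The action of `C_2` on `C_p × C_p` by inversion. -/
def invHom (p : ℕ) : Multiplicative (ZMod 2) →* MulAut (Multiplicative (ZMod p × ZMod p)) where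
  toFun g := invAut p ^ (Multiplicative.toAdd g).val
  map_one' := by simp
  map_mul' g h := by
    have h2 : invAut p ^ 2 = 1 := by
      ext x
      all_goals simp [invAut, sq]
    show invAut p ^ (Multiplicative.toAdd (g * h)).val = _
    rw [toAdd_mul, ZMod.val_add, ← pow_add]
    exact (pow_eq_pow_mod _ h2).symm

/-- The generalized dihedral group `(C_p × C_p) ⋊ C_2`: the semidirect product of
`C_p × C_p` (written multiplicatively) by the group of order 2 acting by inversion. -/
abbrev GenDihedral (p : ℕ) : Type :=
  SemidirectProduct (Multiplicative (ZMod p × ZMod p)) (Multiplicative (ZMod 2)) (invHom p)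

/-!
Write `W = C_p × D_p` and fix a bijection `e : W ≃ V`. Conjugation by `e` turns the left
regular representation of `W` into a regular subgroup `F ≅ W` of `Perm V`, and carries
`Hol W`, the normalizer of `λ(W)`, onto the normalizer of `F`; so everything reduces to
`e (Hol W) e⁻¹ ≤ Hol V`. The elements of a holomorph are the maps `x ↦ u * f x` with `f` an
automorphism. For a suitable `e`, the product of `V` reads on `W` as `e x * e y = e (x ⋆ y)`,
where `x ⋆ y` is `x * y`, `y⁻¹ * x` or `x * y⁻¹` according to which of `x`, `y` are squares
(for odd `p` the squares of `W` form `C_p × ⟨r⟩`). Automorphisms of `W` respect `⋆`, hence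
become automorphisms of `V`. Finally `u * y = u ⋆ ι y` for an automorphism `ι` of `W` (the
identity, or inversion on the factor `C_p`), so `e (u * f x) = e u * e (ι (f x))` is again of
the form `x ↦ a * g x` on `V`.
-/

open Equiv

section Holomorph

variable {X : Type*} [Group X]

theorem toPermHom_mem_hol (a : X) : MulAction.toPermHom X X a ∈ Hol X :=
  Subgroup.le_normalizer ⟨a, rfl⟩

theorem MulEquiv.conj_toPermHom (f : X ≃* X) (a : X) :
    f.toEquiv * MulAction.toPermHom X X a * f.toEquiv⁻¹ = MulAction.toPermHom X X (f a) := by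
  ext x
  simp [Perm.mul_apply, Perm.inv_def]

theorem MulEquiv.toEquiv_mem_hol (f : X ≃* X) : f.toEquiv ∈ Hol X := by
  refine Subgroup.mem_normalizer_iff.mpr fun σ => ⟨?_, ?_⟩
  · rintro ⟨a, rfl⟩
    exact ⟨f a, (f.conj_toPermHom a).symm⟩
  · rintro ⟨a, ha⟩
    refine ⟨f.symm a, ?_⟩
    rw [← f.symm.conj_toPermHom, ha]
    ext x
    simp [Perm.mul_apply, Perm.inv_def]

theorem mem_hol_iff_exists_mulEquiv {σ : Perm X} :
    σ ∈ Hol X ↔ ∃ (a : X) (f : X ≃* X), ∀ x, σ x = a * f x := by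
  constructor
  · intro hσ
    have hmul : ∀ g x, σ (g * x) = σ g * (σ 1)⁻¹ * σ x := by
      intro g x
      obtain ⟨h, hh⟩ :=
        (Subgroup.mem_normalizer_iff.mp hσ (MulAction.toPermHom X X g)).mp ⟨g, rfl⟩
      have hconj : ∀ y, σ (g * y) = h * σ y := fun y => by
        simpa [Perm.mul_apply] using (congrArg (· (σ y)) hh).symm
      have hσg : σ g = h * σ 1 := by simpa using hconj 1
      rw [hconj, hσg, mul_inv_cancel_right]
    refine ⟨σ 1, MulEquiv.mk' (σ.trans (Equiv.mulLeft (σ 1)⁻¹)) fun x y => ?_, fun x => ?_⟩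
    · simp [hmul, mul_assoc]
    · exact (mul_inv_cancel_left _ _).symm
  · rintro ⟨a, f, hσ⟩
    have : σ = MulAction.toPermHom X X a * f.toEquiv := Perm.ext hσ
    exact this ▸ mul_mem (toPermHom_mem_hol a) f.toEquiv_mem_hol

end Holomorph

section Transport

variable {W X : Type*} [Group W]

def Equiv.regularSubgroup (e : W ≃ X) : Subgroup (Perm X) :=
  (MulAction.toPermHom W W).range.map e.permCongrHom.toMonoidHom

theorem Equiv.permCongrHom_toPermHom_apply (e : W ≃ X) (w : W) (x : X) :
    e.permCongrHom (MulAction.toPermHom W W w) x = e (w * e.symm x) := rfl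

theorem Equiv.isRegularSubgroup_regularSubgroup (e : W ≃ X) :
    IsRegularSubgroup e.regularSubgroup := by
  refine ⟨fun x y => ?_, ?_⟩
  · refine ⟨_, ⟨_, ⟨e.symm y * (e.symm x)⁻¹, rfl⟩, rfl⟩, ?_⟩
    simp
  · rintro _ ⟨_, ⟨w, rfl⟩, rfl⟩ x hx
    rw [MulEquiv.coe_toMonoidHom, e.permCongrHom_toPermHom_apply, ← e.eq_symm_apply,
      mul_eq_right] at hx
    rw [hx, map_one, map_one]

noncomputable def Equiv.regularSubgroupMulEquiv (e : W ≃ X) : e.regularSubgroup ≃* W :=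
  ((MulAction.toPermHom W W).range.equivMapOfInjective _ e.permCongrHom.injective).symm.trans
    (MonoidHom.ofInjective (MulAction.toPerm_injective (α := W) (β := W))).symm

theorem Equiv.normalizer_regularSubgroup (e : W ≃ X) :
    Subgroup.normalizer (e.regularSubgroup : Set (Perm X)) =
      (Hol W).map e.permCongrHom.toMonoidHom :=
  (Subgroup.map_equiv_normalizer_eq _ _).symm

variable [Group X] (e : W ≃ X) (op : W → W → W)

theorem exists_mulEquiv_apply_eq (he : ∀ x y, e x * e y = e (op x y)) (f : W ≃* W)
    (hf : ∀ x y, f (op x y) = op (f x) (f y)) : ∃ g : X ≃* X, ∀ x, g (e x) = e (f x) := by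
  refine ⟨MulEquiv.mk' (e.symm.trans (f.toEquiv.trans e)) fun x y => ?_,
    fun x => by simp [MulEquiv.mk']⟩
  obtain ⟨x, rfl⟩ := e.surjective x
  obtain ⟨y, rfl⟩ := e.surjective y
  simp [he, hf]

theorem map_hol_le_hol (he : ∀ x y, e x * e y = e (op x y))
    (hop : ∀ (f : W ≃* W) x y, f (op x y) = op (f x) (f y))
    (htwist : ∀ u, ∃ ι : W ≃* W, ∀ y, op u (ι y) = u * y) :
    (Hol W).map e.permCongrHom.toMonoidHom ≤ Hol X := by
  rintro _ ⟨σ, hσ, rfl⟩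
  obtain ⟨u, f, hσ⟩ := mem_hol_iff_exists_mulEquiv.mp hσ
  obtain ⟨ι, hι⟩ := htwist u
  obtain ⟨g, hg⟩ := exists_mulEquiv_apply_eq e op he (f.trans ι) (hop _)
  refine mem_hol_iff_exists_mulEquiv.mpr ⟨e u, g, fun x => ?_⟩
  obtain ⟨x, rfl⟩ := e.surjective x
  calc e.permCongrHom σ (e x) = e (u * f x) := by simp [hσ]
    _ = e u * g (e x) := by rw [hg, he, ← hι]; rfl

end Transport

section SquareTwist

variable {G H : Type*} [Group G] [Group H]

open scoped Classical in
/-- Through `GenDihedral.ofProdDihedral` this is the multiplication of `(C_p × C_p) ⋊ C_2`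
read on `C_p × D_p`. It is defined from the group structure alone, so isomorphisms respect it. -/
noncomputable def squareTwistMul (x y : G) : G :=
  if IsSquare x then x * y else if IsSquare y then y⁻¹ * x else x * y⁻¹

theorem MulEquiv.isSquare_apply_iff (f : G ≃* H) {x : G} : IsSquare (f x) ↔ IsSquare x :=
  ⟨fun h => by simpa using h.map f.symm, IsSquare.map f⟩

theorem MulEquiv.map_squareTwistMul (f : G ≃* H) (x y : G) :
    f (squareTwistMul x y) = squareTwistMul (f x) (f y) := by
  by_cases hx : IsSquare x <;> by_cases hy : IsSquare y <;>
    simp [squareTwistMul, hx, hy, f.isSquare_apply_iff]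

end SquareTwist

theorem IsSquare.prodMk {M N : Type*} [Mul M] [Mul N] {a : M} {b : N} (ha : IsSquare a)
    (hb : IsSquare b) : IsSquare (a, b) := by
  obtain ⟨r, rfl⟩ := ha
  obtain ⟨s, rfl⟩ := hb
  exact ⟨(r, s), rfl⟩

theorem ZMod.even_of_odd {n : ℕ} (hn : Odd n) (a : ZMod n) : Even a := by
  let u := ZMod.unitOfCoprime 2 (Nat.coprime_two_left.mpr hn)
  refine ⟨a * ↑u⁻¹, ?_⟩
  have hu : (u : ZMod n) = 2 := by simp [u]
  rw [← mul_add, ← two_mul, ← hu, Units.mul_inv, mul_one]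

namespace DihedralGroup

theorem isSquare_r {n : ℕ} (hn : Odd n) (k : ZMod n) : IsSquare (r k) := by
  obtain ⟨j, rfl⟩ := ZMod.even_of_odd hn k
  exact ⟨r j, by rw [r_mul_r]⟩

theorem not_isSquare_sr {n : ℕ} (k : ZMod n) : ¬IsSquare (sr k) := by
  rintro ⟨x | x, h⟩ <;> simp [-r_zero] at h

end DihedralGroup

theorem invHom_ofAdd_one (n : ℕ) (a : Multiplicative (ZMod n × ZMod n)) :
    invHom n (Multiplicative.ofAdd 1) a = a⁻¹ := by
  simp [invHom, invAut, ZMod.val_one]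

namespace GenDihedral

open Multiplicative DihedralGroup

variable {n : ℕ}

/-- The sign on `sr` makes this the identity in semidirect-product coordinates, `D_n` being
`ZMod n ⋊ C_2` through `r k ↦ (k, 0)`, `sr k ↦ (-k, 1)`. -/
def ofProdDihedral (n : ℕ) : Multiplicative (ZMod n) × DihedralGroup n ≃ GenDihedral n where
  toFun
    | (m, r k) => ⟨ofAdd (m.toAdd, k), ofAdd 0⟩
    | (m, sr k) => ⟨ofAdd (m.toAdd, -k), ofAdd 1⟩
  invFun x :=
    if x.right = ofAdd 0 then (ofAdd x.left.toAdd.1, r x.left.toAdd.2)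
    else (ofAdd x.left.toAdd.1, sr (-x.left.toAdd.2))
  left_inv := by
    rintro ⟨m, k | k⟩ <;> simp
  right_inv := by
    rintro ⟨a, δ⟩
    obtain rfl | rfl : δ = ofAdd 0 ∨ δ = ofAdd 1 := by revert δ; decide
    all_goals simp

@[simp] theorem ofProdDihedral_r (m : Multiplicative (ZMod n)) (k : ZMod n) :
    ofProdDihedral n (m, r k) = ⟨ofAdd (m.toAdd, k), ofAdd 0⟩ := rfl

@[simp] theorem ofProdDihedral_sr (m : Multiplicative (ZMod n)) (k : ZMod n) :
    ofProdDihedral n (m, sr k) = ⟨ofAdd (m.toAdd, -k), ofAdd 1⟩ := rfl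

theorem isSquare_mk_r (hn : Odd n) (m : Multiplicative (ZMod n)) (k : ZMod n) :
    IsSquare (m, r k) :=
  IsSquare.prodMk (ZMod.even_of_odd hn m.toAdd) (isSquare_r hn k)

theorem not_isSquare_mk_sr (m : Multiplicative (ZMod n)) (k : ZMod n) : ¬IsSquare (m, sr k) :=
  fun h => not_isSquare_sr k (h.map (MonoidHom.snd _ _))

theorem ofProdDihedral_mul_ofProdDihedral (hn : Odd n)
    (x y : Multiplicative (ZMod n) × DihedralGroup n) :
    ofProdDihedral n x * ofProdDihedral n y = ofProdDihedral n (squareTwistMul x y) := by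
  rcases x with ⟨m, k | k⟩ <;> rcases y with ⟨c, d | d⟩ <;>
    simp only [squareTwistMul, isSquare_mk_r hn, not_isSquare_mk_sr, if_true, if_false] <;>
    ext <;> simp [invHom_ofAdd_one] <;> abel

theorem squareTwistMul_inv_fst (hn : Odd n) {u : Multiplicative (ZMod n) × DihedralGroup n}
    (hu : ¬IsSquare u) (y : Multiplicative (ZMod n) × DihedralGroup n) :
    squareTwistMul u (y.1⁻¹, y.2) = u * y := by
  rcases u with ⟨m, k | k⟩
  · exact absurd (isSquare_mk_r hn m k) hu
  rcases y with ⟨c, d | d⟩ <;>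
    simp [squareTwistMul, isSquare_mk_r hn, not_isSquare_mk_sr, mul_comm]

theorem exists_squareTwistMul_eq_mul (hn : Odd n)
    (u : Multiplicative (ZMod n) × DihedralGroup n) :
    ∃ ι : Multiplicative (ZMod n) × DihedralGroup n ≃* Multiplicative (ZMod n) × DihedralGroup n,
      ∀ y, squareTwistMul u (ι y) = u * y := by
  by_cases hu : IsSquare u
  · exact ⟨MulEquiv.refl _, fun y => by simp [squareTwistMul, hu]⟩
  · exact ⟨(MulEquiv.inv _).prodCongr (MulEquiv.refl _), squareTwistMul_inv_fst hn hu⟩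

end GenDihedral

theorem dihedral_prod_type_regular_in_hol_genDihedral_general (p : ℕ) (hodd : Odd p) :
    ∃ F : Subgroup (Equiv.Perm (GenDihedral p)),
      F ≤ Hol (GenDihedral p) ∧
      Nonempty (↥F ≃* Multiplicative (ZMod p) × DihedralGroup p) ∧
      IsRegularSubgroup F ∧
      Subgroup.normalizer (F : Set (Equiv.Perm (GenDihedral p))) ≤ Hol (GenDihedral p) := by
  set e := GenDihedral.ofProdDihedral p
  have hnorm : Subgroup.normalizer (e.regularSubgroup : Set (Perm (GenDihedral p))) ≤
      Hol (GenDihedral p) := by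
    rw [e.normalizer_regularSubgroup]
    exact map_hol_le_hol e squareTwistMul (GenDihedral.ofProdDihedral_mul_ofProdDihedral hodd)
      (fun f => f.map_squareTwistMul) (GenDihedral.exists_squareTwistMul_eq_mul hodd)
  exact ⟨e.regularSubgroup, Subgroup.le_normalizer.trans hnorm, ⟨e.regularSubgroupMulEquiv⟩,
    e.isRegularSubgroup_regularSubgroup, hnorm⟩

/-- The holomorph of the generalized dihedral group `V = (C_p × C_p) ⋊ C_2` of order
`2 p ^ 2` (`p` an odd prime) contains a subgroup isomorphic to `C_p × D_{2p}` acting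
regularly on `V`, whose normalizer in `Equiv.Perm V` is contained in the holomorph. -/
theorem dihedral_prod_type_regular_in_hol_genDihedral (p : ℕ) (hp : p.Prime) (hodd : Odd p) :
    ∃ F : Subgroup (Equiv.Perm (GenDihedral p)),
      F ≤ Hol (GenDihedral p) ∧
      Nonempty (↥F ≃* Multiplicative (ZMod p) × DihedralGroup p) ∧
      IsRegularSubgroup F ∧
      Subgroup.normalizer (F : Set (Equiv.Perm (GenDihedral p))) ≤ Hol (GenDihedral p) :=
  dihedral_prod_type_regular_in_hol_genDihedral_general p hodd
end

section
/- (Theorem 4.1, second case) Let p be an odd prime, G a finite group, G' ≤ G a subgroup of index 2p^2, and λ : G → Equiv.Perm (G ⧸ G') the action by left translation on left cosets. If there exists a regular subgroup of Equiv.Perm (G ⧸ G') isomorphic to ZMod p × DihedralGroup p that is normalized by λ(G), then there exists a regular subgroup of Equiv.Perm (G ⧸ G') isomorphic to the generalized dihedral group (C_p × C_p) ⋊ C_2 that is normalized by λ(G). -/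
/-!
Along the orbit bijection `K ≃ X`, `k ↦ e⁻¹ k • x₀`, a regular subgroup `N ≅ K := C_p × D_p` of
`Perm X` corresponds to the left regular representation `λ(K) ≤ Perm K`, and the normalizer of `N`
to the holomorph `Hol K`. So it suffices to find a regular subgroup of `Perm K` isomorphic to
`(C_p × C_p) ⋊ C_2` and normalized by `Hol K`.

Let `A = C_p × ⟨r⟩` (the elements of order dividing `p`), let `ι` invert the `C_p` factor and
`t = λ(s) ∘ ι`. Then `t` is an involution inverting `λ(A)` by conjugation, and `λ(A) ⋊ ⟨t⟩` acts
regularly on `K`. Every `f ∈ Hol K` is `x ↦ c x * f 1` for some `c ∈ Aut K`. Since `p` is odd, `c`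
preserves `A`, and it commutes with `ι` because it maps the central factor `C_p` and the factor
`D_p`, which is generated by involutions, into themselves. Hence `f t f⁻¹ = λ(m) t` for some
`m ∈ A`, and `f` normalizes `λ(A) ⋊ ⟨t⟩`.
-/

open Equiv MulAction

section Regular

variable {X Y Γ : Type*} [Group Γ]

lemma isRegularSubgroup_range_toPermHom : IsRegularSubgroup (toPermHom Γ Γ).range := by
  refine ⟨fun x y => ⟨toPermHom Γ Γ (y * x⁻¹), ⟨_, rfl⟩, by simp⟩, ?_⟩
  rintro _ ⟨g, rfl⟩ x hx
  rw [show g = 1 by simpa using hx, map_one]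

lemma IsRegularSubgroup.map_permCongrHom {S : Subgroup (Perm X)} (hS : IsRegularSubgroup S)
    (β : X ≃ Y) : IsRegularSubgroup (S.map β.permCongrHom.toMonoidHom) := by
  refine ⟨fun x y => ?_, ?_⟩
  · obtain ⟨s, hs, hsxy⟩ := hS.1 (β.symm x) (β.symm y)
    exact ⟨β.permCongr s, ⟨s, hs, rfl⟩, by simp [Equiv.permCongr_apply, hsxy]⟩
  · rintro _ ⟨s, hs, rfl⟩ x hx
    have : s (β.symm x) = β.symm x := by
      simpa [Equiv.permCongrHom_coe, Equiv.permCongr_apply, Equiv.eq_symm_apply] using hx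
    rw [hS.2 s hs _ this, map_one]

lemma IsRegularSubgroup.bijective_apply {N : Subgroup (Perm X)} (hN : IsRegularSubgroup N)
    (x₀ : X) : Function.Bijective fun n : N => (n : Perm X) x₀ := by
  refine ⟨fun m n hmn => ?_, fun x => ?_⟩
  · have h := hN.2 _ (N.mul_mem (N.inv_mem n.2) m.2) x₀ (by simp [hmn])
    exact (inv_mul_eq_one.mp (Subtype.ext h)).symm
  · obtain ⟨s, hs, hsx⟩ := hN.1 x₀ x
    exact ⟨⟨s, hs⟩, hsx⟩

lemma eq_permCongrHom_comp_toPermHom {ψ : Γ →* Perm X} {x₀ : X}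
    (hψ : Function.Bijective fun g => ψ g x₀) :
    ψ = (Equiv.ofBijective _ hψ).permCongrHom.toMonoidHom.comp (toPermHom Γ Γ) := by
  ext g x
  obtain ⟨h, rfl⟩ := hψ.2 x
  simp [Equiv.permCongrHom_coe, Equiv.permCongr_apply, Equiv.ofBijective_symm_apply_apply]

lemma toPermHom_injective : Function.Injective (toPermHom Γ Γ) := fun g h hgh => by
  simpa using congrArg (· 1) hgh

lemma isRegularSubgroup_range_of_bijective_apply {ψ : Γ →* Perm X} {x₀ : X}
    (hψ : Function.Bijective fun g => ψ g x₀) : IsRegularSubgroup ψ.range := by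
  rw [eq_permCongrHom_comp_toPermHom hψ, MonoidHom.range_comp]
  exact (isRegularSubgroup_range_toPermHom (Γ := Γ)).map_permCongrHom _

lemma injective_of_bijective_apply {ψ : Γ →* Perm X} {x₀ : X}
    (hψ : Function.Bijective fun g => ψ g x₀) : Function.Injective ψ := by
  rw [eq_permCongrHom_comp_toPermHom hψ]
  exact (Equiv.ofBijective _ hψ).permCongrHom.injective.comp toPermHom_injective

lemma IsRegularSubgroup.exists_equiv_eq_map [Nonempty X]
    {N : Subgroup (Perm X)} (hN : IsRegularSubgroup N) (e : N ≃* Γ) :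
    ∃ β : Γ ≃ X, N = (toPermHom Γ Γ).range.map β.permCongrHom.toMonoidHom := by
  obtain ⟨x₀⟩ := ‹Nonempty X›
  have hψ : Function.Bijective fun k => (N.subtype.comp e.symm.toMonoidHom) k x₀ :=
    (hN.bijective_apply x₀).comp e.symm.bijective
  refine ⟨Equiv.ofBijective _ hψ, ?_⟩
  rw [← MonoidHom.range_comp, ← eq_permCongrHom_comp_toPermHom hψ, MonoidHom.range_comp,
    MonoidHom.range_eq_top.mpr e.symm.surjective, ← MonoidHom.range_eq_map, N.range_subtype]

end Regular

section Holomorph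

variable {K : Type*} [Group K] {f : Perm K}

lemma exists_mulEquiv_apply_mul_of_mem_hol (hf : f ∈ Hol K) :
    ∃ c : K ≃* K, ∀ k x, f (k * x) = c k * f x := by
  let e := MonoidHom.ofInjective (toPermHom_injective (Γ := K))
  let c := (e.trans ((toPermHom K K).range.normalizerMonoidHom ⟨f, hf⟩)).trans e.symm
  refine ⟨c, fun k x => ?_⟩
  have hc : toPermHom K K (c k) = f * toPermHom K K k * f⁻¹ := by
    change ((e (e.symm _)) : Perm K) = _
    rw [e.apply_symm_apply]
    rfl
  simpa using (Equiv.ext_iff.mp hc (f x)).symm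

lemma conj_toPermHom_eq {c : K →* K} (hc : ∀ k x, f (k * x) = c k * f x) (k : K) :
    f * toPermHom K K k * f⁻¹ = toPermHom K K (c k) := by
  rw [mul_inv_eq_iff_eq_mul]
  ext x : 1
  simp [hc]

end Holomorph

lemma ZMod.eq_zero_of_add_self_eq_zero {p : ℕ} (hp : Odd p) {a : ZMod p} (h : a + a = 0) :
    a = 0 := by
  obtain ⟨m, rfl⟩ := hp
  have h0 : ((2 * m + 1 : ℕ) : ZMod (2 * m + 1)) = 0 := ZMod.natCast_self _
  push_cast at h0
  linear_combination (-a) * h0 + ((m : ZMod (2 * m + 1)) + 1) * h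

def zmodPowHom {M : Type*} [Monoid M] (n : ℕ) [NeZero n] (σ : M) (hσ : σ ^ n = 1) :
    Multiplicative (ZMod n) →* M where
  toFun c := σ ^ c.toAdd.val
  map_one' := by simp
  map_mul' a b := by
    rw [toAdd_mul, ZMod.val_add, ← pow_add]
    exact (pow_eq_pow_mod _ hσ).symm

lemma Multiplicative.eq_one_or_eq_ofAdd_one (c : Multiplicative (ZMod 2)) :
    c = 1 ∨ c = .ofAdd 1 := by
  revert c
  decide

open DihedralGroup

abbrev DihProd (p : ℕ) : Type := Multiplicative (ZMod p) × DihedralGroup p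

namespace DihProd

variable {p : ℕ}

def rotHom (p : ℕ) : Multiplicative (ZMod p × ZMod p) →* DihProd p where
  toFun a := (.ofAdd a.toAdd.1, r a.toAdd.2)
  map_one' := rfl
  map_mul' a b := by simp [r_mul_r]

lemma rotHom_apply (a : Multiplicative (ZMod p × ZMod p)) :
    rotHom p a = (.ofAdd a.toAdd.1, r a.toAdd.2) := rfl

lemma rotHom_injective : Function.Injective (rotHom p) := fun a b hab => by
  simp only [rotHom_apply, Prod.ext_iff, EmbeddingLike.apply_eq_iff_eq, r.injEq] at hab
  exact Multiplicative.toAdd.injective (Prod.ext hab.1 hab.2)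

lemma mem_range_rotHom {x : DihProd p} : x ∈ (rotHom p).range ↔ ∃ i, x.2 = r i := by
  constructor
  · rintro ⟨a, rfl⟩
    exact ⟨_, rfl⟩
  · rintro ⟨i, hi⟩
    exact ⟨.ofAdd (x.1.toAdd, i), Prod.ext rfl hi.symm⟩

lemma notMem_range_rotHom {x : DihProd p} : x ∉ (rotHom p).range ↔ ∃ j, x.2 = sr j := by
  rw [mem_range_rotHom]
  obtain ⟨z, i | j⟩ := x <;> simp

lemma mul_mem_range_rotHom_of_notMem {x y : DihProd p} (hx : x ∉ (rotHom p).range)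
    (hy : y ∉ (rotHom p).range) : x * y ∈ (rotHom p).range := by
  obtain ⟨i, hi⟩ := notMem_range_rotHom.mp hx
  obtain ⟨j, hj⟩ := notMem_range_rotHom.mp hy
  exact mem_range_rotHom.mpr ⟨j - i, by simp [hi, hj, sr_mul_sr]⟩

lemma pow_eq_one_iff_mem_range_rotHom (hp : Odd p) {x : DihProd p} :
    x ^ p = 1 ↔ x ∈ (rotHom p).range := by
  obtain ⟨z, i | j⟩ := x
  · simp only [mem_range_rotHom, r.injEq, exists_eq', iff_true]
    ext
    · simp
    · simp [r_pow, ← r_zero]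
  · simp only [mem_range_rotHom, reduceCtorEq, exists_false, iff_false]
    intro h
    have hsr : (sr j : DihedralGroup p) ^ p = sr j := by
      obtain ⟨m, rfl⟩ := hp
      rw [pow_succ, pow_mul, sq, sr_mul_self, one_pow, one_mul]
    simpa [hsr, ← r_zero] using congrArg Prod.snd h

lemma fst_eq_one_of_mul_self_eq_one (hp : Odd p) {x : DihProd p} (h : x * x = 1) :
    x.1 = 1 := by
  have h1 : x.1.toAdd + x.1.toAdd = 0 := by
    simpa using congrArg (fun y : DihProd p => y.1.toAdd) h
  exact Multiplicative.toAdd.injective (ZMod.eq_zero_of_add_self_eq_zero hp h1)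

lemma eq_one_of_mul_self_eq_one (hp : Odd p) {x : DihProd p} (hx : x ∈ (rotHom p).range)
    (h : x * x = 1) : x = 1 := by
  obtain ⟨i, hi⟩ := mem_range_rotHom.mp hx
  have h2 : i + i = 0 := by simpa [hi, r_mul_r, ← r_zero] using congrArg Prod.snd h
  ext
  · exact fst_eq_one_of_mul_self_eq_one hp h
  · rw [hi, ZMod.eq_zero_of_add_self_eq_zero hp h2, r_zero]; rfl

def sr₀ : DihProd p := (1, sr 0)

lemma sr₀_mul_self : (sr₀ : DihProd p) * sr₀ = 1 := by
  simp [sr₀]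

def invFst (p : ℕ) : DihProd p ≃* DihProd p :=
  MulEquiv.prodCongr (MulEquiv.inv _) (MulEquiv.refl _)

lemma invFst_apply (x : DihProd p) : invFst p x = (x.1⁻¹, x.2) := rfl

section Automorphism

variable (hp : Odd p) (c : DihProd p ≃* DihProd p)
include hp

lemma map_mem_range_rotHom {x : DihProd p} (hx : x ∈ (rotHom p).range) :
    c x ∈ (rotHom p).range := by
  rw [← pow_eq_one_iff_mem_range_rotHom hp] at hx ⊢
  rw [← map_pow, hx, map_one]

lemma map_sr₀_notMem_range_rotHom : c sr₀ ∉ (rotHom p).range := by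
  intro h
  have h1 := eq_one_of_mul_self_eq_one hp h (by rw [← map_mul, sr₀_mul_self, map_one])
  simp [sr₀, ← r_zero] at h1

lemma fst_map_one_mk (d : DihedralGroup p) : (c (1, d)).1 = 1 := by
  have hinv : ∀ j, (c (1, sr j)).1 = 1 := fun j =>
    fst_eq_one_of_mul_self_eq_one hp (by rw [← map_mul]; simp)
  obtain i | j := d
  · have h : ((1 : Multiplicative (ZMod p)), r i) = (1, sr 0) * (1, sr i) := by
      simp [sr_mul_sr]
    rw [h, map_mul, Prod.fst_mul, hinv, hinv, one_mul]
  · exact hinv j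

lemma snd_map_mk_one (z : Multiplicative (ZMod p)) : (c (z, 1)).2 = 1 := by
  obtain ⟨i, hi⟩ := mem_range_rotHom.mp
    (map_mem_range_rotHom hp c (mem_range_rotHom.mpr ⟨0, by simp [r_zero]⟩) : c (z, 1) ∈ _)
  have hcomm : c (z, 1) * sr₀ = sr₀ * c (z, 1) := by
    obtain ⟨y, hy⟩ := c.surjective sr₀
    rw [← hy, ← map_mul, ← map_mul]
    congr 1
    ext <;> simp [mul_comm]
  have h := congrArg Prod.snd hcomm
  simp only [Prod.snd_mul, hi, sr₀, r_mul_sr, sr_mul_r, sr.injEq, zero_sub, zero_add] at h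
  rw [hi, ZMod.eq_zero_of_add_self_eq_zero hp (a := i) (by linear_combination -h), r_zero]

lemma map_invFst (x : DihProd p) : c (invFst p x) = invFst p (c x) := by
  have hx : x = (x.1, 1) * (1, x.2) := by ext <;> simp
  have hinl : invFst p (c (x.1, 1)) = (c (x.1, 1))⁻¹ := by
    ext
    · simp [invFst_apply]
    · simp [invFst_apply, snd_map_mk_one hp]
  have hinr : invFst p (c (1, x.2)) = c (1, x.2) := by
    ext
    · simp [invFst_apply, fst_map_one_mk hp]
    · rfl
  have hinvx : invFst p x = (x.1, 1)⁻¹ * (1, x.2) := by ext <;> simp [invFst_apply]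
  rw [hinvx, map_mul, map_inv, hx, map_mul, map_mul, hinl, hinr]
  simp

end Automorphism

def reflPerm (p : ℕ) : Perm (DihProd p) :=
  toPermHom (DihProd p) (DihProd p) sr₀ * (invFst p).toEquiv

lemma reflPerm_apply (x : DihProd p) : reflPerm p x = sr₀ * invFst p x := rfl

lemma reflPerm_sq : reflPerm p ^ 2 = 1 := by
  ext x : 1
  simp [sq, reflPerm_apply, invFst_apply, sr₀, ← mul_assoc]

lemma reflPerm_mul_toPermHom_rotHom (a : Multiplicative (ZMod p × ZMod p)) :
    reflPerm p * toPermHom _ _ (rotHom p a) = toPermHom _ _ (rotHom p a⁻¹) * reflPerm p := by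
  ext x : 1
  simp [reflPerm_apply, invFst_apply, sr₀, rotHom_apply, mul_comm, ← mul_assoc, r_mul_sr,
    sr_mul_r]

def genDihedralPerm (p : ℕ) : GenDihedral p →* Perm (DihProd p) :=
  SemidirectProduct.lift ((toPermHom _ _).comp (rotHom p))
    (zmodPowHom 2 (reflPerm p) reflPerm_sq)
    (by
      intro g
      refine MonoidHom.ext fun a => ?_
      rcases g.eq_one_or_eq_ofAdd_one with rfl | rfl
      · simp
      · have hσ : zmodPowHom 2 (reflPerm p) reflPerm_sq (.ofAdd 1) = reflPerm p := pow_one _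
        have hinv : invHom p (.ofAdd 1) a = a⁻¹ := rfl
        simp only [MonoidHom.comp_apply, MulEquiv.coe_toMonoidHom, hinv, hσ, MulAut.conj_apply,
          reflPerm_mul_toPermHom_rotHom, mul_inv_cancel_right])

lemma genDihedralPerm_mk_one (a : Multiplicative (ZMod p × ZMod p)) :
    genDihedralPerm p ⟨a, 1⟩ = toPermHom _ _ (rotHom p a) := by
  simp [genDihedralPerm, SemidirectProduct.lift]

lemma genDihedralPerm_mk_ofAdd_one (a : Multiplicative (ZMod p × ZMod p)) :
    genDihedralPerm p ⟨a, .ofAdd 1⟩ = toPermHom _ _ (rotHom p a) * reflPerm p := by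
  simp only [genDihedralPerm, SemidirectProduct.lift, MonoidHom.coe_mk, OneHom.coe_mk,
    MonoidHom.comp_apply]
  rfl

lemma mem_range_genDihedralPerm {σ : Perm (DihProd p)} :
    σ ∈ (genDihedralPerm p).range ↔ ∃ k ∈ (rotHom p).range,
      σ = toPermHom _ _ k ∨ σ = toPermHom _ _ k * reflPerm p := by
  constructor
  · rintro ⟨⟨a, c⟩, rfl⟩
    rcases c.eq_one_or_eq_ofAdd_one with rfl | rfl
    · exact ⟨_, ⟨a, rfl⟩, .inl (genDihedralPerm_mk_one a)⟩
    · exact ⟨_, ⟨a, rfl⟩, .inr (genDihedralPerm_mk_ofAdd_one a)⟩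
  · rintro ⟨_, ⟨a, rfl⟩, rfl | rfl⟩
    · exact ⟨⟨a, 1⟩, genDihedralPerm_mk_one a⟩
    · exact ⟨⟨a, .ofAdd 1⟩, genDihedralPerm_mk_ofAdd_one a⟩

lemma bijective_genDihedralPerm_apply_one :
    Function.Bijective fun g => genDihedralPerm p g 1 := by
  have hstab : ∀ g, genDihedralPerm p g 1 = 1 → g = 1 := by
    rintro ⟨a, c⟩ hg
    rcases c.eq_one_or_eq_ofAdd_one with rfl | rfl
    · rw [genDihedralPerm_mk_one] at hg
      have ha : a = 1 := rotHom_injective (by simpa using hg)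
      rw [ha]
      rfl
    · rw [genDihedralPerm_mk_ofAdd_one] at hg
      simpa [reflPerm_apply, invFst_apply, sr₀, rotHom_apply, r_mul_sr, ← r_zero]
        using congrArg Prod.snd hg
  refine ⟨fun g h hgh => ?_, fun y => ?_⟩
  · have := hstab (h⁻¹ * g) (by simp [hgh])
    exact (inv_mul_eq_one.mp this).symm
  · obtain ⟨z, i | j⟩ := y
    · refine ⟨⟨.ofAdd (z.toAdd, i), 1⟩, ?_⟩
      simp only [genDihedralPerm_mk_one]
      simp [rotHom_apply]
    · refine ⟨⟨.ofAdd (z.toAdd, -j), .ofAdd 1⟩, ?_⟩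
      simp only [genDihedralPerm_mk_ofAdd_one]
      simp [reflPerm_apply, invFst_apply, sr₀, rotHom_apply, r_mul_sr]

lemma exists_conj_reflPerm_eq (hp : Odd p) {f : Perm (DihProd p)}
    {c : DihProd p ≃* DihProd p} (hc : ∀ k x, f (k * x) = c k * f x) :
    ∃ m ∈ (rotHom p).range, f * reflPerm p * f⁻¹ = toPermHom _ _ m * reflPerm p := by
  have hf : ∀ x, f x = c x * f 1 := fun x => by simpa using hc x 1
  set u := f 1
  -- `u = w * invFst p u` with `w` central, so `f ∘ reflPerm p` and `reflPerm p ∘ f` differ by a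
  -- constant left factor
  set w : DihProd p := (u.1 ^ 2, 1)
  have hw : ∀ y, w * y = y * w := fun y => by ext <;> simp [w, mul_comm]
  have hwu : u = w * invFst p u := by ext <;> simp [w, invFst_apply, sq]
  refine ⟨c sr₀ * w * sr₀, ?_, ?_⟩
  · rw [mul_assoc, hw, ← mul_assoc]
    exact mul_mem (mul_mem_range_rotHom_of_notMem (map_sr₀_notMem_range_rotHom hp c)
      (notMem_range_rotHom.mpr ⟨0, rfl⟩)) (mem_range_rotHom.mpr ⟨0, by simp [w, r_zero]⟩)
  rw [mul_inv_eq_iff_eq_mul]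
  ext x : 1
  calc f (reflPerm p x) = c sr₀ * invFst p (c x) * u := by
        rw [hf, reflPerm_apply, map_mul, map_invFst hp]
    _ = c sr₀ * (w * invFst p (c x)) * invFst p u := by
        conv_lhs => rw [hwu]
        rw [hw (invFst p (c x))]
        simp only [mul_assoc]
    _ = c sr₀ * w * sr₀ * (sr₀ * invFst p (c x) * invFst p u) := by
        simp only [mul_assoc]
        rw [← mul_assoc sr₀ sr₀, sr₀_mul_self, one_mul]
    _ = (toPermHom (DihProd p) (DihProd p) (c sr₀ * w * sr₀) * reflPerm p * f) x := by
        rw [Perm.mul_apply, Perm.mul_apply, reflPerm_apply, hf x, map_mul (invFst p)]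
        simp [mul_assoc]

lemma hol_le_normalizer_range_genDihedralPerm (hp : Odd p) :
    Hol (DihProd p) ≤
      Subgroup.normalizer ((genDihedralPerm p).range : Set (Perm (DihProd p))) := by
  refine Subgroup.le_normalizer_iff.mpr fun f hf σ hσ => ?_
  obtain ⟨c, hc⟩ := exists_mulEquiv_apply_mul_of_mem_hol hf
  have hconj := conj_toPermHom_eq (c := c.toMonoidHom) hc
  obtain ⟨k, hk, rfl | rfl⟩ := mem_range_genDihedralPerm.mp hσ
  · exact mem_range_genDihedralPerm.mpr ⟨c k, map_mem_range_rotHom hp c hk, .inl (hconj k)⟩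
  · obtain ⟨m, hm, hfm⟩ := exists_conj_reflPerm_eq hp hc
    refine mem_range_genDihedralPerm.mpr
      ⟨c k * m, mul_mem (map_mem_range_rotHom hp c hk) hm, .inr ?_⟩
    calc f * (toPermHom _ _ k * reflPerm p) * f⁻¹
        = (f * toPermHom _ _ k * f⁻¹) * (f * reflPerm p * f⁻¹) := by group
      _ = toPermHom _ _ (c k * m) * reflPerm p := by
        rw [hconj, hfm, map_mul, mul_assoc]; rfl

end DihProd

theorem dihedral_prod_type_implies_genDihedral_type_general (p : ℕ) (hodd : Odd p)
    (G : Type*) [Group G] (G' : Subgroup G)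
    (h : ∃ N : Subgroup (Equiv.Perm (G ⧸ G')),
        IsRegularSubgroup N ∧
        Nonempty (↥N ≃* Multiplicative (ZMod p) × DihedralGroup p) ∧
        ∀ g : G, MulAction.toPermHom G (G ⧸ G') g ∈ Subgroup.normalizer (N : Set (Equiv.Perm (G ⧸ G')))) :
    ∃ M : Subgroup (Equiv.Perm (G ⧸ G')),
        IsRegularSubgroup M ∧
        Nonempty (↥M ≃* GenDihedral p) ∧
        ∀ g : G, MulAction.toPermHom G (G ⧸ G') g ∈ Subgroup.normalizer (M : Set (Equiv.Perm (G ⧸ G'))) := by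
  obtain ⟨N, hN, ⟨e⟩, hG⟩ := h
  obtain ⟨β, rfl⟩ := hN.exists_equiv_eq_map e
  have hψ := DihProd.bijective_genDihedralPerm_apply_one (p := p)
  refine ⟨(DihProd.genDihedralPerm p).range.map β.permCongrHom.toMonoidHom, ?_, ?_, fun g => ?_⟩
  · exact (isRegularSubgroup_range_of_bijective_apply hψ).map_permCongrHom β
  · exact ⟨(MulEquiv.subgroupMap β.permCongrHom _).symm.trans
      (MonoidHom.ofInjective (injective_of_bijective_apply hψ)).symm⟩
  · rw [← Subgroup.map_equiv_normalizer_eq] at hG ⊢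
    exact Subgroup.map_mono (DihProd.hol_le_normalizer_range_genDihedralPerm hodd) (hG g)

/-- Theorem 4.1, second case: if a separable extension of degree `2 p ^ 2` (Galois data
`(G, G')`, `p` an odd prime) has a Hopf Galois structure of type `C_p × D_{2p}`, then it
has one of type `(C_p × C_p) ⋊ C_2`. -/
theorem dihedral_prod_type_implies_genDihedral_type (p : ℕ) (hp : p.Prime) (hodd : Odd p)
    (G : Type*) [Group G] [Finite G] (G' : Subgroup G)
    (hindex : G'.index = 2 * p ^ 2)
    (h : ∃ N : Subgroup (Equiv.Perm (G ⧸ G')),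
        IsRegularSubgroup N ∧
        Nonempty (↥N ≃* Multiplicative (ZMod p) × DihedralGroup p) ∧
        ∀ g : G, MulAction.toPermHom G (G ⧸ G') g ∈ Subgroup.normalizer (N : Set (Equiv.Perm (G ⧸ G')))) :
    ∃ M : Subgroup (Equiv.Perm (G ⧸ G')),
        IsRegularSubgroup M ∧
        Nonempty (↥M ≃* GenDihedral p) ∧
        ∀ g : G, MulAction.toPermHom G (G ⧸ G') g ∈ Subgroup.normalizer (M : Set (Equiv.Perm (G ⧸ G'))) :=
  dihedral_prod_type_implies_genDihedral_type_general p hodd G G' h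
end
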